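/- In the setting of the previous context, if r_N > max(r_{C,0}, r_{C,1}) and r_A < min(r_{C,0}, r_{C,1}) and 0 < q_0 < 1, then r_{C,0} ≤ E[R | c_0, a_0] ≤ E[R | a_0] and r_{C,1} ≥ E[R | c_1, a_1] ≥ E[R | a_1]; that is, the Comply estimates are closer to the compliers' true rewards than the Actual estimates on both arms. -/
import Mathlib

/-- If never-takers are healthier than compliers (r_N > max(r_C0, r_C1))
and always-takers are less healthy (r_A < min(r_C0, r_C1)), with 0 < q0 < 1, then
r_C0 ≤ E[R|c_0,a_0] ≤ E[R|a_0] and r_C1 ≥ E[R|c_1,a_1] ≥ E[R|a_1]: the Comply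
estimates are closer to the compliers' true rewards than the Actual estimates on both arms. -/
theorem comply_closer_than_actual
    (pN pA pC q0 q1 rN rA rC0 rC1 : ℝ)
    (hN : 0 < pN) (hA : 0 < pA) (hC : 0 < pC) (hsum : pN + pA + pC = 1)
    (hq0 : 0 < q0) (hq0' : q0 < 1) (hq1 : q1 = 1 - q0)
    (hrN : rN > max rC0 rC1) (hrA : rA < min rC0 rC1) :
    (rC0 ≤ (pC * rC0 + pN * rN) / (pC + pN) ∧
      (pC * rC0 + pN * rN) / (pC + pN) ≤ (q0 * pC * rC0 + pN * rN) / (q0 * pC + pN)) ∧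
    (rC1 ≥ (pA * rA + pC * rC1) / (pA + pC) ∧
      (pA * rA + pC * rC1) / (pA + pC) ≥ (pA * rA + q1 * pC * rC1) / (pA + q1 * pC)) := by
  have h1 : rC0 < rN := lt_of_le_of_lt (le_max_left _ _) hrN
  have h2 : rC1 < rN := lt_of_le_of_lt (le_max_right _ _) hrN
  have h3 : rA < rC0 := lt_of_lt_of_le hrA (min_le_left _ _)
  have h4 : rA < rC1 := lt_of_lt_of_le hrA (min_le_right _ _)
  subst hq1
  have d1 : 0 < pC + pN := by linarith
  have d2 : 0 < q0 * pC + pN := by positivity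
  have d3 : 0 < pA + pC := by linarith
  have d4 : 0 < pA + (1 - q0) * pC := by nlinarith
  refine ⟨⟨?_, ?_⟩, ?_, ?_⟩
  · rw [le_div_iff₀ d1]; nlinarith
  · rw [div_le_div_iff₀ d1 d2]; nlinarith [mul_nonneg (mul_nonneg (mul_pos hN hC).le (sub_nonneg.2 h1.le)) (sub_nonneg.2 hq0'.le)]
  · rw [ge_iff_le, div_le_iff₀ d3]; nlinarith
  · rw [ge_iff_le, div_le_div_iff₀ d4 d3]; nlinarith [mul_nonneg (mul_nonneg (mul_pos hA hC).le (sub_nonneg.2 h4.le)) hq0.le]
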